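/- arXiv:2511.12499 — 2 statements merged into one kernel-verified Lean document; each statement's English description precedes it below -/
import Mathlib

section
/- Let G be a cograph with cocomponents G_1,...,G_t. For any set F of edges contained in the union of the edge sets of the cocomponents, the vertex connectivity of G - F equals the vertex connectivity of G. -/
open SimpleGraph

/-- A cograph is a finite simple graph with no induced path on 4 vertices. -/
def IsCograph {V : Type*} (G : SimpleGraph V) : Prop :=
  IsEmpty (SimpleGraph.pathGraph 4 ↪g G)

/-- The minimum degree of a graph. -/
noncomputable def minDeg {V : Type*} (G : SimpleGraph V) : ℕ :=
  sInf {d | ∃ v, d = (G.neighborSet v).ncard}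

/-- The maximum degree of a graph. -/
noncomputable def maxDeg {V : Type*} (G : SimpleGraph V) : ℕ :=
  sSup {d | ∃ v, d = (G.neighborSet v).ncard}

/-- Vertex connectivity: the least size of a vertex set whose removal
disconnects the graph or leaves a graph with at most one vertex. -/
noncomputable def vConn {V : Type*} (G : SimpleGraph V) : ℕ :=
  sInf {n | ∃ S : Set V, S.ncard = n ∧
    (¬ (G.induce (Sᶜ)).Connected ∨ (Sᶜ : Set V).ncard ≤ 1)}

/-- `k`-connectedness, with the convention that `K_1` is `1`-connected. -/
def IsKConnected {V : Type*} (k : ℕ) (G : SimpleGraph V) : Prop :=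
  k ≤ vConn G ∨ (k = 1 ∧ G.Connected)

/-- Edge connectivity: the least size of a set of edges whose removal
disconnects the graph. -/
noncomputable def eConn {V : Type*} (G : SimpleGraph V) : ℕ :=
  sInf {n | ∃ F : Set (Sym2 V), F ⊆ G.edgeSet ∧ F.ncard = n ∧
    ¬ (G.deleteEdges F).Connected}

/-- `k`-edge-connectedness, with the convention that `K_1` is `1`-edge-connected. -/
def IsKEdgeConnected {V : Type*} (k : ℕ) (G : SimpleGraph V) : Prop :=
  k ≤ eConn G ∨ (k = 1 ∧ G.Connected)

/-- The order of a primary cocomponent of `G`, i.e. the largest order of a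
connected component of the complement of `G`. -/
noncomputable def primaryOrder {V : Type*} (G : SimpleGraph V) : ℕ :=
  sSup {n | ∃ c : (Gᶜ).ConnectedComponent, n = c.supp.ncard}

/-- A connected graph is super edge-connected if every minimum edge-cut
consists of all edges incident with a single vertex of minimum degree. -/
def SuperEdgeConnected {V : Type*} (G : SimpleGraph V) : Prop :=
  G.Connected ∧ ∀ F : Set (Sym2 V), F ⊆ G.edgeSet → ¬ (G.deleteEdges F).Connected →
    F.ncard = eConn G →
    ∃ v, F = G.incidenceSet v ∧ (G.neighborSet v).ncard = minDeg G

section Helpers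
variable {V : Type*}

lemma walk_induce {G : SimpleGraph V} {s : Set V} {a b : V}
    (p : G.Walk a b) (hs : ∀ c ∈ p.support, c ∈ s) (ha : a ∈ s) (hb : b ∈ s) :
    (G.induce s).Reachable ⟨a, ha⟩ ⟨b, hb⟩ := by
  induction p with
  | nil => exact Reachable.refl _
  | @cons u c b' h q ih =>
    have hc : c ∈ s := hs c (by simp [Walk.support_cons])
    have h1 : (G.induce s).Adj ⟨u, ha⟩ ⟨c, hc⟩ := h
    exact h1.reachable.trans
      (ih (fun x hx => hs x (by simp [Walk.support_cons]; right; exact hx)) hc hb)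

lemma compl_induce (G : SimpleGraph V) (s : Set V) :
    (G.induce s)ᶜ = (Gᶜ).induce s := by
  ext a b
  constructor
  · rintro ⟨hne, hnadj⟩
    exact ⟨fun h => hne (Subtype.ext h), hnadj⟩
  · rintro ⟨hne, hnadj⟩
    exact ⟨fun h => hne (congrArg Subtype.val h), hnadj⟩

lemma IsCograph.induce' {G : SimpleGraph V} (hG : IsCograph G) (s : Set V) :
    IsCograph (G.induce s) :=
  ⟨fun f => hG.false ((Embedding.induce s).comp f)⟩

lemma adj_of_reachable_card_two {G : SimpleGraph V} {x y : V}
    (h : G.Reachable x y) (hxy : x ≠ y) (hV : ∀ z : V, z = x ∨ z = y) : G.Adj x y := by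
  obtain ⟨p⟩ := h
  cases p with
  | nil => exact absurd rfl hxy
  | @cons _ z _ h q =>
    rcases hV z with hz | hz
    · exact absurd (hz ▸ h) G.irrefl
    · exact hz ▸ h

lemma exists_first_exit {K : SimpleGraph V} {v a : V} :
    ∀ n (p : K.Walk v a), p.length ≤ n → v ≠ a →
      ∃ c, K.Adj v c ∧ ∃ q : K.Walk c a, v ∉ q.support := by
  classical
  intro n
  induction n with
  | zero =>
    intro p hp hva
    cases p with
    | nil => exact absurd rfl hva
    | cons h q => simp [Walk.length_cons] at hp
  | succ n ih =>
    intro p hp hva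
    cases p with
    | nil => exact absurd rfl hva
    | @cons _ c _ h q =>
      by_cases hv : v ∈ q.support
      · exact ih (q.dropUntil v hv)
          (le_trans (Walk.length_dropUntil_le q hv)
            (by simpa [Walk.length_cons, Nat.succ_le_succ_iff] using hp)) hva
      · exact ⟨c, h, q, hv⟩

lemma isCograph_no_p4 {G : SimpleGraph V} (hG : IsCograph G) {x y z t : V}
    (e1 : G.Adj x y) (e2 : G.Adj y z) (e3 : G.Adj z t)
    (n1 : ¬G.Adj x z) (n2 : ¬G.Adj x t) (n3 : ¬G.Adj y t)
    (d1 : x ≠ z) (d2 : x ≠ t) (d3 : y ≠ t) : False := by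
  have d4 : x ≠ y := e1.ne
  have d5 : y ≠ z := e2.ne
  have d6 : z ≠ t := e3.ne
  have e1' : G.Adj y x := e1.symm
  have e2' : G.Adj z y := e2.symm
  have e3' : G.Adj t z := e3.symm
  have n1' : ¬G.Adj z x := fun h => n1 h.symm
  have n2' : ¬G.Adj t x := fun h => n2 h.symm
  have n3' : ¬G.Adj t y := fun h => n3 h.symm
  apply hG.false
  refine ⟨⟨![x, y, z, t], ?_⟩, ?_⟩
  · intro i j hij
    fin_cases i <;> fin_cases j <;> simp_all
  · intro i j
    fin_cases i <;> fin_cases j <;>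
      simp [pathGraph_adj, e1, e2, e3, e1', e2', e3', n1, n2, n3, n1', n2', n3'] <;> assumption

lemma exists_noncut {G : SimpleGraph V} [Fintype V] (hG : G.Connected)
    (h2 : 2 ≤ Fintype.card V) : ∃ v : V, (G.induce ({v}ᶜ : Set V)).Connected := by
  classical
  have hne : Nonempty V := Fintype.card_pos_iff.mp (by omega)
  obtain ⟨u⟩ := hne
  obtain ⟨v, -, hv⟩ := Finset.exists_max_image Finset.univ (G.dist u) ⟨u, Finset.mem_univ u⟩
  have huv : u ≠ v := by
    rintro rfl
    have : ∀ x : V, x = u := by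
      intro x
      have h0 : G.dist u x = 0 :=
        Nat.le_zero.mp (by simpa [SimpleGraph.dist_self] using hv x (Finset.mem_univ x))
      rcases dist_eq_zero_iff_eq_or_not_reachable.mp h0 with h | h
      · exact h.symm
      · exact absurd (hG u x) h
    have : Fintype.card V ≤ 1 := Fintype.card_le_one_iff.mpr fun a b => (this a).trans (this b).symm
    omega
  have key : ∀ x : V, x ≠ v → ∃ p : G.Walk u x, v ∉ p.support := by
    intro x hx
    obtain ⟨p, hp⟩ := (hG u x).exists_walk_length_eq_dist
    refine ⟨p, fun hvp => ?_⟩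
    have h1 : G.dist u v ≤ (p.takeUntil v hvp).length := dist_le _
    have h2' : G.dist v x ≤ (p.dropUntil v hvp).length := dist_le _
    have h3 : (p.takeUntil v hvp).length + (p.dropUntil v hvp).length = p.length := by
      rw [← Walk.length_append, p.take_spec hvp]
    have h4 : G.dist u x ≤ G.dist u v := hv x (Finset.mem_univ x)
    have h5 : G.dist v x = 0 := by omega
    rcases dist_eq_zero_iff_eq_or_not_reachable.mp h5 with h | h
    · exact hx h.symm
    · exact absurd (hG v x) h
  refine ⟨v, ?_⟩
  rw [connected_iff]
  constructor
  · rintro ⟨x, hx⟩ ⟨y, hy⟩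
    have hx' : x ≠ v := hx
    have hy' : y ≠ v := hy
    obtain ⟨p, hp⟩ := key x hx'
    obtain ⟨q, hq⟩ := key y hy'
    have hu : u ∈ ({v}ᶜ : Set V) := huv
    have hrx := walk_induce (s := ({v}ᶜ : Set V)) p
      (fun c hc => fun hcv => hp (by rwa [Set.mem_singleton_iff.mp hcv] at hc)) hu hx
    have hry := walk_induce (s := ({v}ᶜ : Set V)) q
      (fun c hc => fun hcv => hq (by rwa [Set.mem_singleton_iff.mp hcv] at hc)) hu hy
    exact hrx.symm.trans hry
  · exact ⟨⟨u, huv⟩⟩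

lemma cograph_not_both_connected :
    ∀ (n : ℕ) {W : Type*} [Fintype W] (G : SimpleGraph W),
      Fintype.card W = n → 2 ≤ n → IsCograph G → G.Connected → Gᶜ.Connected → False := by
  intro n
  induction n using Nat.strong_induction_on with
  | _ n ih =>
  intro W _ G hcard h2 hcog hGc hKc
  classical
  rcases eq_or_lt_of_le h2 with h2eq | h3
  · -- base case : exactly two vertices
    have hc2 : Fintype.card W = 2 := by omega
    have hn2 : Nat.card W = 2 := by rw [Nat.card_eq_fintype_card]; exact hc2
    obtain ⟨x, y, hxy, huniv⟩ := Nat.card_eq_two_iff.mp hn2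
    have hall : ∀ z : W, z = x ∨ z = y := by
      intro z
      have : z ∈ ({x, y} : Set W) := huniv ▸ Set.mem_univ z
      simpa using this
    have hA := adj_of_reachable_card_two (hGc x y) hxy hall
    have hB := adj_of_reachable_card_two (hKc x y) hxy hall
    exact ((G.compl_adj x y).mp hB).2 hA
  · -- inductive step
    obtain ⟨v, hHconn⟩ := exists_noncut hGc (by omega)
    set s : Set W := ({v}ᶜ : Set W) with hs
    have hcards : Fintype.card s = n - 1 := by
      simp only [hs, Fintype.card_compl_set, hcard, Set.card_singleton]
    have hHcompl : ¬ ((Gᶜ).induce s).Connected := by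
      intro hc
      refine ih (n - 1) (by omega) (G.induce s) hcards (by omega) (hcog.induce' s)
        hHconn ?_
      rwa [compl_induce]
    have hsne : Nonempty s := by
      refine Fintype.card_pos_iff.mp ?_
      omega
    obtain ⟨a, b, hab⟩ : ∃ a b : s, ¬ ((Gᶜ).induce s).Reachable a b := by
      by_contra h
      push_neg at h
      exact hHcompl ⟨h⟩
    -- "reach avoiding v" machinery
    have RAsymm : ∀ {x y : W}, (∃ q : (Gᶜ).Walk x y, v ∉ q.support) →
        ∃ q : (Gᶜ).Walk y x, v ∉ q.support := by
      rintro x y ⟨q, hq⟩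
      exact ⟨q.reverse, by simpa [Walk.support_reverse] using hq⟩
    have RAtrans : ∀ {x y z : W}, (∃ q : (Gᶜ).Walk x y, v ∉ q.support) →
        (∃ q : (Gᶜ).Walk y z, v ∉ q.support) →
        ∃ q : (Gᶜ).Walk x z, v ∉ q.support := by
      rintro x y z ⟨q, hq⟩ ⟨r, hr⟩
      exact ⟨q.append r, by
        rw [Walk.mem_support_append_iff]
        rintro (h | h)
        exacts [hq h, hr h]⟩
    have RAadj : ∀ {x y : W}, (Gᶜ).Adj x y → x ≠ v → y ≠ v →
        ∃ q : (Gᶜ).Walk x y, v ∉ q.support := by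
      intro x y h hx hy
      refine ⟨h.toWalk, ?_⟩
      simp only [Adj.toWalk, Walk.support_cons, Walk.support_nil, List.mem_cons,
        List.mem_singleton]
      rintro (h | h | h)
      exacts [hx h.symm, hy h.symm, (List.not_mem_nil h)]
    have hnRA : ¬ ∃ q : (Gᶜ).Walk (↑a) (↑b), v ∉ q.support := by
      rintro ⟨q, hq⟩
      refine hab (walk_induce q (fun c hc => ?_) a.2 b.2)
      intro hcv
      rw [Set.mem_singleton_iff] at hcv
      exact hq (hcv ▸ hc)
    have cross : ∀ {x y : W}, x ≠ v → y ≠ v →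
        ¬ (∃ q : (Gᶜ).Walk x y, v ∉ q.support) → G.Adj x y := by
      intro x y hx hy hn
      have hne : x ≠ y := by
        rintro rfl
        exact hn ⟨Walk.nil, by simpa using Ne.symm hx⟩
      by_contra hadj
      exact hn (RAadj ((G.compl_adj x y).mpr ⟨hne, hadj⟩) hx hy)
    -- first exits towards a and b
    have hva : v ≠ (↑a : W) := Ne.symm (Set.mem_compl_singleton_iff.mp a.2)
    have hvb : v ≠ (↑b : W) := Ne.symm (Set.mem_compl_singleton_iff.mp b.2)
    obtain ⟨pa⟩ := hKc v ↑a
    obtain ⟨c0, hc0, qa, hqa⟩ := exists_first_exit pa.length pa le_rfl hva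
    obtain ⟨pb⟩ := hKc v ↑b
    obtain ⟨d0, hd0, qb, hqb⟩ := exists_first_exit pb.length pb le_rfl hvb
    -- a G-neighbour w of v
    obtain ⟨w, hw⟩ : ∃ w, G.Adj v w := by
      obtain ⟨x0⟩ := hsne
      have hx0 : v ≠ (↑x0 : W) := Ne.symm (Set.mem_compl_singleton_iff.mp x0.2)
      obtain ⟨p⟩ := hGc v ↑x0
      generalize hz : (↑x0 : W) = z at p hx0
      cases p with
      | nil => exact absurd rfl hx0
      | cons h q => exact ⟨_, h⟩
    -- a (Gᶜ)-neighbour d of v not reach-avoiding w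
    obtain ⟨d, hd, hd2⟩ : ∃ d, (Gᶜ).Adj v d ∧
        ¬ (∃ q : (Gᶜ).Walk d w, v ∉ q.support) := by
      by_cases hwa : ∃ q : (Gᶜ).Walk w ↑a, v ∉ q.support
      · exact ⟨d0, hd0, fun hdw =>
          hnRA (RAtrans (RAsymm hwa) (RAtrans (RAsymm hdw) ⟨qb, hqb⟩))⟩
      · exact ⟨c0, hc0, fun hcw => hwa (RAtrans (RAsymm hcw) ⟨qa, hqa⟩)⟩
    -- the minimal G-neighbour of v in the side of w
    set T : Finset W :=
      Finset.univ.filter (fun x => G.Adj v x ∧ ∃ q : (Gᶜ).Walk x w, v ∉ q.support) with hT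
    have hwT : w ∈ T := by
      rw [hT, Finset.mem_filter]
      exact ⟨Finset.mem_univ w, hw, ⟨Walk.nil, by simpa using hw.ne⟩⟩
    obtain ⟨ws, hwsT, hmin⟩ := Finset.exists_min_image T ((Gᶜ).dist v) ⟨w, hwT⟩
    rw [hT, Finset.mem_filter] at hwsT
    obtain ⟨-, hws1, hws2⟩ := hwsT
    have hk1 : 2 ≤ (Gᶜ).dist v ws := by
      by_contra h
      push_neg at h
      rcases (by omega : (Gᶜ).dist v ws = 0 ∨ (Gᶜ).dist v ws = 1) with h' | h'
      · rcases dist_eq_zero_iff_eq_or_not_reachable.mp h' with h'' | h''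
        · exact hws1.ne h''
        · exact h'' (hKc v ws)
      · exact ((G.compl_adj v ws).mp (dist_eq_one_iff_adj.mp h')).2 hws1
    have hk2 : (Gᶜ).dist v ws = 2 := by
      by_contra hk2
      have hk3 : 3 ≤ (Gᶜ).dist v ws := by omega
      obtain ⟨p', hp'⟩ := ((hKc v ws).symm).exists_walk_length_eq_dist
      cases p' with
      | nil => exact absurd rfl hws1.ne
      | @cons _ y _ h' q' =>
        have hq'len : q'.length = (Gᶜ).dist v ws - 1 := by
          rw [Walk.length_cons] at hp'
          rw [SimpleGraph.dist_comm] at hp'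
          omega
        have hyv : y ≠ v := by
          intro h
          have hadj : (Gᶜ).Adj v ws := h ▸ h'.symm
          have : (Gᶜ).dist v ws ≤ 1 := by
            simpa using dist_le hadj.toWalk
          omega
        have hnadj : ¬ (Gᶜ).Adj v y := by
          intro hadj
          have : (Gᶜ).dist v ws ≤ 2 := by
            simpa using dist_le (Walk.cons hadj h'.symm.toWalk)
          omega
        have hGvy : G.Adj v y := by
          by_contra hga
          exact hnadj ((G.compl_adj v y).mpr ⟨Ne.symm hyv, hga⟩)
        have hRAyw : ∃ q : (Gᶜ).Walk y w, v ∉ q.support :=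
          RAtrans (RAadj h'.symm hyv hws1.ne') hws2
        have hyT : y ∈ T := by
          rw [hT, Finset.mem_filter]
          exact ⟨Finset.mem_univ y, hGvy, hRAyw⟩
        have hdy : (Gᶜ).dist v y ≤ (Gᶜ).dist v ws - 1 := by
          have := dist_le q'.reverse
          rwa [Walk.length_reverse, hq'len] at this
        have := hmin y hyT
        omega
    obtain ⟨p, hp⟩ := (hKc v ws).exists_walk_length_eq_dist
    rw [hk2] at hp
    cases p with
    | nil => simp at hp
    | @cons _ c _ h1 q =>
      cases q with
      | nil => simp at hp
      | @cons _ z _ h2 q2 =>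
        cases q2 with
        | @cons _ z2 _ h3 q3 =>
          simp only [Walk.length_cons] at hp
          omega
        | nil =>
          have hcs : (Gᶜ).Adj c ws := h2
          have hcw : ∃ r : (Gᶜ).Walk c w, v ∉ r.support :=
            RAtrans (RAadj h2 h1.ne' hws1.ne') hws2
          have e2 : G.Adj ws d :=
            cross hws1.ne' hd.ne' (fun hq' => hd2 (RAtrans (RAsymm hq') hws2))
          have e3 : G.Adj d c := by
            have : ¬ (∃ r : (Gᶜ).Walk d c, v ∉ r.support) :=
              fun hq' => hd2 (RAtrans hq' hcw)
            exact cross hd.ne' h1.ne' this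
          exact isCograph_no_p4 hcog hws1 e2 e3
            ((G.compl_adj v d).mp hd).2 ((G.compl_adj v c).mp h1).2
            (fun h => ((G.compl_adj c ws).mp hcs).2 h.symm)
            hd.ne h1.ne hcs.ne'

end Helpers

/-- Deleting edges lying inside the cocomponents of a cograph does not change
the vertex connectivity. -/
theorem stmt2 {V : Type*} [Fintype V] (G : SimpleGraph V) (hG : IsCograph G)
    (F : Set (Sym2 V)) (hFE : F ⊆ G.edgeSet)
    (hF : ∀ u v : V, s(u, v) ∈ F → (Gᶜ).Reachable u v) :
    vConn (G.deleteEdges F) = vConn G := by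
  classical
  set H := G.deleteEdges F with hH
  have hHle : H ≤ G := deleteEdges_le F
  set AG : Set ℕ := {n | ∃ S : Set V, S.ncard = n ∧
      (¬ (G.induce (Sᶜ)).Connected ∨ (Sᶜ : Set V).ncard ≤ 1)} with hAG
  set AH : Set ℕ := {n | ∃ S : Set V, S.ncard = n ∧
      (¬ (H.induce (Sᶜ)).Connected ∨ (Sᶜ : Set V).ncard ≤ 1)} with hAH
  have hvG : vConn G = sInf AG := rfl
  have hvH : vConn H = sInf AH := rfl
  have huniv : ∀ (G' : SimpleGraph V), (Set.univ : Set V).ncard ∈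
      {n | ∃ S : Set V, S.ncard = n ∧
        (¬ (G'.induce (Sᶜ)).Connected ∨ (Sᶜ : Set V).ncard ≤ 1)} := by
    intro G'
    exact ⟨Set.univ, rfl, Or.inr (by rw [Set.compl_univ]; simp)⟩
  have hneG : AG.Nonempty := ⟨_, huniv G⟩
  have hneH : AH.Nonempty := ⟨_, huniv H⟩
  have hmono : ∀ S : Set V, ¬ (G.induce (Sᶜ)).Connected → ¬ (H.induce (Sᶜ)).Connected := by
    intro S hnc hc
    refine hnc (hc.mono ?_)
    intro x y hxy
    exact hHle hxy
  have h1 : vConn H ≤ vConn G := by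
    rw [hvG, hvH]
    obtain ⟨S, hS, hprop⟩ := Nat.sInf_mem hneG
    refine Nat.sInf_le ⟨S, hS, ?_⟩
    rcases hprop with hnc | hle1
    · exact Or.inl (hmono S hnc)
    · exact Or.inr hle1
  have h2 : vConn G ≤ vConn H := by
    rw [hvG, hvH]
    obtain ⟨S, hS, hprop⟩ := Nat.sInf_mem hneH
    rcases hprop with hnc | hle1
    on_goal 2 => exact le_trans (Nat.sInf_le ⟨S, rfl, Or.inr hle1⟩) (le_of_eq hS)
    by_cases hGc : (G.induce (Sᶜ)).Connected
    on_goal 2 => exact le_trans (Nat.sInf_le ⟨S, rfl, Or.inl hGc⟩) (le_of_eq hS)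
    have hnonempty : Nonempty (↥(Sᶜ : Set V)) := hGc.nonempty
    have hpre : ¬ (H.induce (Sᶜ)).Preconnected := fun h => hnc ⟨h⟩
    obtain ⟨a, b, hab⟩ : ∃ a b : ↥(Sᶜ : Set V), ¬ (H.induce (Sᶜ)).Reachable a b := by
      by_contra h
      push_neg at h
      exact hpre h
    -- building an H-edge between vertices in different cocomponents
    have mkAdj : ∀ x y : V, ¬ (Gᶜ).Reachable x y → H.Adj x y := by
      intro x y hn
      have hne : x ≠ y := by
        rintro rfl
        exact hn (Reachable.refl x)
      have hGadj : G.Adj x y := by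
        by_contra hga
        exact hn (Adj.reachable ((G.compl_adj x y).mpr ⟨hne, hga⟩))
      have hFn : s(x, y) ∉ F := fun hmem => hn (hF x y hmem)
      rw [hH, deleteEdges_adj]
      exact ⟨hGadj, hFn⟩
    have hab' : (Gᶜ).Reachable ↑a ↑b := by
      by_contra hn
      have : (H.induce (Sᶜ)).Adj a b := mkAdj ↑a ↑b hn
      exact hab this.reachable
    have habne : (a : V) ≠ ↑b := by
      intro h
      exact hab (Subtype.ext h ▸ Reachable.refl a)
    set P : Set V := {x | (Gᶜ).Reachable x ↑a} with hP
    have haP : (↑a : V) ∈ P := Reachable.refl _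
    have hbP : (↑b : V) ∈ P := hab'.symm
    have hSP : (Sᶜ : Set V) ⊆ P := by
      intro x hx
      by_contra hxa
      have hxa' : ¬ (Gᶜ).Reachable x ↑a := hxa
      have hxb : ¬ (Gᶜ).Reachable x ↑b := fun h => hxa' (h.trans hab'.symm)
      have r1 : (H.induce (Sᶜ)).Adj ⟨x, hx⟩ a := mkAdj x ↑a hxa'
      have r2 : (H.induce (Sᶜ)).Adj ⟨x, hx⟩ b := mkAdj x ↑b hxb
      exact hab (r1.symm.reachable.trans r2.reachable)
    -- the cocomponent P induces a disconnected subgraph of G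
    have hreach_ind : ∀ (x : V) (hx : x ∈ P),
        ((Gᶜ).induce P).Reachable ⟨x, hx⟩ ⟨↑a, haP⟩ := by
      intro x hx
      have hr : (Gᶜ).Reachable x ↑a := hx
      obtain ⟨p⟩ := hr
      refine walk_induce p (fun c hc => ?_) hx haP
      exact ⟨p.dropUntil c hc⟩
    have hPcon : ((G.induce P)ᶜ).Connected := by
      rw [compl_induce]
      rw [connected_iff]
      refine ⟨?_, ⟨⟨↑a, haP⟩⟩⟩
      intro x y
      exact (hreach_ind ↑x x.2).trans (hreach_ind ↑y y.2).symm
    have hcard2 : 2 ≤ Fintype.card (↥P) := by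
      have : Nontrivial (↥P) := ⟨⟨⟨↑a, haP⟩, ⟨↑b, hbP⟩, fun h => habne (Subtype.mk_eq_mk.mp h)⟩⟩
      exact Fintype.one_lt_card_iff_nontrivial.mpr this
    have hPnc : ¬ (G.induce P).Connected := by
      intro hc
      exact cograph_not_both_connected (Fintype.card (↥P)) (G.induce P) rfl hcard2
        (hG.induce' P) hc hPcon
    have hsub : Pᶜ ⊆ S := by
      intro x hx
      by_contra hxS
      exact hx (hSP hxS)
    have hmemG : (Pᶜ : Set V).ncard ∈ AG :=
      ⟨Pᶜ, rfl, Or.inl (by rw [compl_compl]; exact hPnc)⟩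
    calc sInf AG ≤ (Pᶜ : Set V).ncard := Nat.sInf_le hmemG
      _ ≤ S.ncard := Set.ncard_le_ncard hsub (Set.toFinite S)
      _ = sInf AH := hS
  exact le_antisymm h1 h2
end

section
/- For any tree T of order m and any k ≥ 2, every k-edge-connected cograph G with δ(G) ≥ k + m contains a subtree T' isomorphic to T such that G - V(T') is k-edge-connected. -/
open SimpleGraph

section ProofAux


private lemma exists_adj_of_reachable {V : Type*} {G : SimpleGraph V} {u v : V}
    (h : G.Reachable u v) (hne : u ≠ v) : ∃ w, G.Adj u w := by
  obtain ⟨p⟩ := h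
  cases p with
  | nil => exact absurd rfl hne
  | cons h q => exact ⟨_, h⟩

private lemma connected_exists_adj {V : Type*} {G : SimpleGraph V} (hc : G.Connected)
    {u w : V} (hne : w ≠ u) : ∃ x, G.Adj u x :=
  exists_adj_of_reachable (hc.preconnected u w) (fun h => hne h.symm)

private lemma induce_compl_eq {V : Type*} (G : SimpleGraph V) (s : Set V) :
    (G.induce s)ᶜ = Gᶜ.induce s := by
  ext a b
  simp only [compl_adj, comap_adj, Function.Embedding.coe_subtype, ne_eq, Subtype.ext_iff]

/-- transfer a walk whose support lies in `s` into the induced graph -/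
private lemma reachable_induce_of_walk {V : Type*} {G : SimpleGraph V} {s : Set V} :
    ∀ {x y : V} (p : G.Walk x y) (hp : ∀ z ∈ p.support, z ∈ s) (hx : x ∈ s) (hy : y ∈ s),
      (G.induce s).Reachable ⟨x, hx⟩ ⟨y, hy⟩ := by
  intro x y p
  induction p with
  | nil => intro _ hx hy; rfl
  | cons h q ih =>
    intro hp hx hy
    rename_i u v w
    have hv : v ∈ s := hp v (by simp)
    have hadj : (G.induce s).Adj ⟨u, hx⟩ ⟨v, hv⟩ := h
    exact hadj.reachable.trans (ih (fun z hz => hp z (by simp [hz])) hv hy)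

-- last-exit lemma
private lemma last_exit {V : Type*} {G : SimpleGraph V} {v : V} :
    ∀ {x y : V} (p : G.Walk x y) (hy : y ≠ v),
      (∃ hx : x ≠ v, (G.induce ({v}ᶜ : Set V)).Reachable ⟨x, hx⟩ ⟨y, hy⟩) ∨
      (∃ c, ∃ hc : c ≠ v, G.Adj v c ∧ (G.induce ({v}ᶜ : Set V)).Reachable ⟨c, hc⟩ ⟨y, hy⟩) := by
  intro x y p
  induction p with
  | nil => intro hy; exact Or.inl ⟨hy, by rfl⟩
  | cons h q ih =>
    intro hy
    rename_i u z w
    rcases ih hy with ⟨hz, hr⟩ | ⟨c, hc, hvc, hr⟩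
    · by_cases hu : u = v
      · subst hu
        exact Or.inr ⟨z, hz, h, hr⟩
      · have hadj : (G.induce ({v}ᶜ : Set V)).Adj ⟨u, hu⟩ ⟨z, hz⟩ := h
        exact Or.inl ⟨hu, hadj.reachable.trans hr⟩
    · exact Or.inr ⟨c, hc, hvc, hr⟩

-- find adjacent pair a~b along a walk with v~a, ¬v~b
private lemma first_nonnbr {V : Type*} {G : SimpleGraph V} {v : V} {s : Set V} :
    ∀ {c u : ↥s} (p : (G.induce s).Walk c u) (hc : G.Adj v c.val) (hu : ¬ G.Adj v u.val),
      ∃ a b : ↥s, (G.induce s).Adj a b ∧ G.Adj v a.val ∧ ¬ G.Adj v b.val ∧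
        (G.induce s).Reachable b u := by
  intro c u p
  induction p with
  | nil => intro hc hu; exact absurd hc hu
  | cons h q ih =>
    intro hc hu
    rename_i x z w
    by_cases hz : G.Adj v z.val
    · exact ih hz hu
    · exact ⟨x, z, h, hc, hz, q.reachable⟩



private lemma build_p4 {V : Type*} {G : SimpleGraph V} {w0 w1 w2 w3 : V}
    (h01 : G.Adj w0 w1) (h12 : G.Adj w1 w2) (h23 : G.Adj w2 w3)
    (h02 : ¬ G.Adj w0 w2) (h03 : ¬ G.Adj w0 w3) (h13 : ¬ G.Adj w1 w3)
    (n02 : w0 ≠ w2) (n03 : w0 ≠ w3) (n13 : w1 ≠ w3) :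
    Nonempty (pathGraph 4 ↪g G) := by
  have key : ∀ i j : Fin 4, (pathGraph 4).Adj i j ↔
      (i.val, j.val) ∈ [(0,1),(1,0),(1,2),(2,1),(2,3),(3,2)] := by
    intro i j
    rw [pathGraph_adj]
    fin_cases i <;> fin_cases j <;> simp <;> decide
  refine ⟨⟨⟨![w0, w1, w2, w3], ?_⟩, ?_⟩⟩
  · intro i j hij
    fin_cases i <;> fin_cases j <;> simp_all <;>
      first
        | rfl
        | (exact absurd hij h01.ne)
        | (exact absurd hij h12.ne)
        | (exact absurd hij h23.ne)
        | (exact absurd hij.symm h01.ne)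
        | (exact absurd hij.symm h12.ne)
        | (exact absurd hij.symm h23.ne)
  · intro i j
    change G.Adj (![w0, w1, w2, w3] i) (![w0, w1, w2, w3] j) ↔ (pathGraph 4).Adj i j
    rw [key]
    fin_cases i <;> fin_cases j <;>
      simp [h01, h12, h23, h01.symm, h12.symm, h23.symm, G.irrefl] <;>
      first
        | decide
        | (exact h02)
        | (exact h03)
        | (exact h13)
        | (exact fun h => h02 h.symm)
        | (exact fun h => h03 h.symm)
        | (exact fun h => h13 h.symm)

private lemma p4_of_cut {V : Type*} {G : SimpleGraph V} {v u : V}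
    (hconn : G.Connected) (hu : u ≠ v) (huv : ¬ G.Adj v u)
    (hdis : ¬ (G.induce ({v}ᶜ : Set V)).Connected) : Nonempty (pathGraph 4 ↪g G) := by
  set W : Set V := {v}ᶜ with hW
  set H : SimpleGraph ↥W := G.induce W with hH
  have hu' : u ∈ W := hu
  set u' : ↥W := ⟨u, hu'⟩ with hu'def
  have hne : Nonempty ↥W := ⟨u'⟩
  have hpre : ¬ H.Preconnected := by
    intro hp
    exact hdis ((connected_iff H).mpr ⟨hp, hne⟩)
  -- some vertex not reachable from u'
  have hd : ∃ d : ↥W, ¬ H.Reachable d u' := by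
    by_contra hall
    push_neg at hall
    apply hpre
    intro x y
    exact (hall x).trans (hall y).symm
  obtain ⟨d, hdu⟩ := hd
  -- neighbor of v whose class is that of u'
  obtain ⟨p⟩ := hconn.preconnected v u
  rcases last_exit p hu with ⟨hx, _⟩ | ⟨c, hc, hvc, hcu⟩
  · exact absurd rfl hx
  obtain ⟨q⟩ := hcu
  obtain ⟨a, b, hab, hva, hvb, hbu⟩ := first_nonnbr q hvc huv
  -- neighbor of v in the class of d
  obtain ⟨p2⟩ := hconn.preconnected v d.val
  rcases last_exit p2 d.2 with ⟨hx, _⟩ | ⟨e, he, hve, hed⟩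
  · exact absurd rfl hx
  have hed' : H.Reachable ⟨e, he⟩ d := hed
  -- reachability facts
  have hRab : H.Reachable a b := hab.reachable
  have hau : H.Reachable a u' := hRab.trans hbu
  have hnotbe : ¬ H.Reachable b ⟨e, he⟩ := by
    intro h
    -- h : H.Reachable b ⟨e,he⟩ ; hed' : ⟨e,he⟩ ~ d ; hbu : b ~ u'
    exact hdu (((h.trans hed').symm.trans hbu))
  have hnotae : ¬ H.Reachable a ⟨e, he⟩ := fun h => hnotbe (hRab.symm.trans h)
  -- build the P4  b - a - v - e
  have hGab : G.Adj a.val b.val := hab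
  refine build_p4 (G := G) (w0 := b.val) (w1 := a.val) (w2 := v) (w3 := e)
    hGab.symm hva.symm hve ?_ ?_ ?_ ?_ ?_ ?_
  · exact fun h => hvb h.symm
  · intro h
    exact hnotbe (SimpleGraph.Adj.reachable (by exact h : H.Adj b ⟨e, he⟩))
  · intro h
    exact hnotae (SimpleGraph.Adj.reachable (by exact h : H.Adj a ⟨e, he⟩))
  · exact b.2
  · intro h
    exact hnotbe (by rw [show b = (⟨e, he⟩ : ↥W) from Subtype.ext h])
  · intro h
    exact hnotae (by rw [show a = (⟨e, he⟩ : ↥W) from Subtype.ext h])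

private def embedding_compl {A B : Type*} {G1 : SimpleGraph A} {G2 : SimpleGraph B}
    (e : G1 ↪g G2) : G1ᶜ ↪g G2ᶜ :=
  ⟨e.toEmbedding, by
    intro a b
    simp only [compl_adj, ne_eq, EmbeddingLike.apply_eq_iff_eq]
    rw [show (G2.Adj (e.toEmbedding a) (e.toEmbedding b)) = G1.Adj a b from propext e.map_adj_iff]⟩

private lemma p4_self_compl {A : Type*} {G : SimpleGraph A}
    (h : Nonempty (pathGraph 4 ↪g Gᶜ)) : Nonempty (pathGraph 4 ↪g G) := by
  obtain ⟨e⟩ := h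
  have flip : pathGraph 4 ↪g (pathGraph 4)ᶜ := by
    refine ⟨⟨![1, 3, 0, 2], ?_⟩, ?_⟩
    · intro i j hij
      fin_cases i <;> fin_cases j <;> simp_all <;> rfl
    · intro i j
      fin_cases i <;> fin_cases j <;>
        simp [compl_adj, pathGraph_adj] <;> decide
  have e2 : (pathGraph 4)ᶜ ↪g Gᶜᶜ := embedding_compl e
  rw [compl_compl] at e2
  exact ⟨e2.comp flip⟩

private lemma seinsche (n : ℕ) : ∀ {V : Type*} [Fintype V] (G : SimpleGraph V),
    Fintype.card V = n → 2 ≤ n → G.Connected → Gᶜ.Connected →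
    Nonempty (pathGraph 4 ↪g G) := by
  induction n using Nat.strong_induction_on with
  | _ n ih =>
    intro V _ G hcard hn hc hcc
    classical
    -- every vertex has a neighbor and a non-neighbor
    have hnontriv : Nontrivial V := by
      rw [← Fintype.one_lt_card_iff_nontrivial, hcard]; omega
    by_cases hsmall : n = 2
    · -- impossible: both connected on two vertices
      exfalso
      obtain ⟨u, w, huw⟩ := hnontriv
      obtain ⟨x, hx⟩ := connected_exists_adj hc (u := u) (w := w) huw.symm
      obtain ⟨y, hy⟩ := connected_exists_adj hcc (u := u) (w := w) huw.symm
      -- card 2: any two vertices distinct from u are equal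
      have hcard2 : Fintype.card V = 2 := by omega
      have : x = y := by
        have h3 : ∀ a b c : V, a ≠ b → a ≠ c → b = c := by
          intro a b c hab hac
          by_contra hbc
          have : 3 ≤ Fintype.card V := by
            have : ({a, b, c} : Finset V).card = 3 := by
              rw [Finset.card_insert_of_notMem (by simp [hab, hac]),
                Finset.card_insert_of_notMem (by simp [hbc]), Finset.card_singleton]
            calc 3 = ({a, b, c} : Finset V).card := this.symm
            _ ≤ Fintype.card V := Finset.card_le_univ _
          omega
        exact h3 u x y hx.ne hy.ne
      subst this
      exact hy.2 hx
    · have hn3 : 3 ≤ n := by omega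
      obtain ⟨v, w0, hvw0⟩ := hnontriv
      -- case on connectivity of the two induced graphs at v
      by_cases h1 : ¬ (G.induce ({v}ᶜ : Set V)).Connected
      · obtain ⟨u, hu⟩ := connected_exists_adj hcc (u := v) (w := w0) hvw0.symm
        exact p4_of_cut hc (fun h => hu.ne h.symm) (fun h => hu.2 h) h1
      · by_cases h2 : ¬ (Gᶜ.induce ({v}ᶜ : Set V)).Connected
        · obtain ⟨u, hu⟩ := connected_exists_adj hc (u := v) (w := w0) hvw0.symm
          have : ¬ Gᶜ.Adj v u := by simp [compl_adj, hu]
          exact p4_self_compl (p4_of_cut hcc (fun h => hu.ne h.symm) this h2)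
        · push_neg at h1 h2
          -- both induced graphs connected: induction
          have hcardW : Fintype.card ↥({v}ᶜ : Set V) = n - 1 := by
            rw [Fintype.card_compl_set, hcard]
            simp
          have h2' : (G.induce ({v}ᶜ : Set V))ᶜ.Connected := by
            rw [induce_compl_eq]; exact h2
          obtain ⟨e⟩ := ih (n-1) (by omega) (G.induce ({v}ᶜ : Set V)) hcardW (by omega) h1 h2'
          exact ⟨(SimpleGraph.Embedding.induce ({v}ᶜ : Set V)).comp e⟩

private lemma exists_leaf {V : Type*} [Fintype V] {T : SimpleGraph V} (hT : T.IsTree)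
    (h2 : 2 ≤ Fintype.card V) : ∃ v u : V, T.neighborSet v = {u} := by
  classical
  have hsum : ∑ v, T.degree v = 2 * T.edgeFinset.card := T.sum_degrees_eq_twice_card_edges
  have hcard : T.edgeFinset.card + 1 = Fintype.card V := hT.card_edgeFinset
  have hpos : ∀ v : V, 1 ≤ T.degree v := by
    intro v
    obtain ⟨w, hw⟩ : ∃ w : V, w ≠ v := Fintype.exists_ne_of_one_lt_card (by omega) v
    obtain ⟨x, hx⟩ := connected_exists_adj hT.isConnected hw
    exact Finset.card_pos.mpr ⟨x, T.mem_neighborFinset v x |>.mpr hx⟩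
  have hex : ∃ v : V, T.degree v = 1 := by
    by_contra hall
    push_neg at hall
    have h2le : ∀ v : V, 2 ≤ T.degree v := by
      intro v
      have := hpos v
      have := hall v
      omega
    have : 2 * Fintype.card V ≤ ∑ v, T.degree v := by
      calc 2 * Fintype.card V = ∑ _v : V, 2 := by
            rw [Finset.sum_const, Finset.card_univ]; ring
      _ ≤ ∑ v, T.degree v := Finset.sum_le_sum (fun v _ => h2le v)
    omega
  obtain ⟨v, hv⟩ := hex
  obtain ⟨u, hu⟩ := Finset.card_eq_one.mp hv
  refine ⟨v, u, ?_⟩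
  ext z
  simp only [SimpleGraph.mem_neighborSet, Set.mem_singleton_iff, ← SimpleGraph.mem_neighborFinset,
    hu, Finset.mem_singleton]

private lemma second_vertex {V : Type*} {T : SimpleGraph V} {v x : V} (w : T.Walk v x)
    (h : v ≠ x) : ∃ z, T.Adj v z ∧ z ∈ w.support.tail := by
  cases w with
  | nil => exact absurd rfl h
  | cons hadj w' => exact ⟨_, hadj, by simp⟩

private lemma path_avoid {V : Type*} {T : SimpleGraph V} {v u : V}
    (hleaf : T.neighborSet v = {u}) :
    ∀ {x y : V} (p : T.Walk x y), p.IsPath → x ≠ v → y ≠ v → v ∉ p.support := by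
  intro x y p hp hx hy hv
  classical
  have hspec := p.take_spec hv
  have hnodup : ((p.takeUntil v hv).append (p.dropUntil v hv)).support.Nodup := by
    rw [hspec]; exact hp.support_nodup
  rw [SimpleGraph.Walk.support_append] at hnodup
  obtain ⟨z1, hz1adj, hz1⟩ := second_vertex (p.dropUntil v hv) (fun h => hy h.symm)
  obtain ⟨z2, hz2adj, hz2⟩ := second_vertex (p.takeUntil v hv).reverse (fun h => hx h.symm)
  have hz1u : z1 = u := by
    have : z1 ∈ T.neighborSet v := hz1adj
    rwa [hleaf, Set.mem_singleton_iff] at this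
  have hz2u : z2 = u := by
    have : z2 ∈ T.neighborSet v := hz2adj
    rwa [hleaf, Set.mem_singleton_iff] at this
  rw [hz1u] at hz1
  rw [hz2u] at hz2
  have hmem1 : u ∈ (p.takeUntil v hv).support := by
    have : u ∈ (p.takeUntil v hv).reverse.support := List.mem_of_mem_tail hz2
    rwa [SimpleGraph.Walk.support_reverse, List.mem_reverse] at this
  exact (List.disjoint_of_nodup_append hnodup) hmem1 hz1

private lemma tree_minus_leaf {V : Type*} [Fintype V] {T : SimpleGraph V} (hT : T.IsTree)
    {v u : V} (hleaf : T.neighborSet v = {u}) :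
    (T.induce ({v}ᶜ : Set V)).IsTree := by
  classical
  have huv : u ≠ v := by
    have : T.Adj v u := by rw [← SimpleGraph.mem_neighborSet, hleaf]; rfl
    exact this.ne'
  constructor
  · rw [connected_iff]
    refine ⟨?_, ⟨⟨u, huv⟩⟩⟩
    rintro ⟨x, hx⟩ ⟨y, hy⟩
    obtain ⟨w⟩ := hT.isConnected.preconnected x y
    set p := w.toPath
    have hvp : v ∉ (p : T.Walk x y).support := path_avoid hleaf _ p.2 hx hy
    refine reachable_induce_of_walk (p : T.Walk x y) ?_ hx hy
    intro z hz
    simp only [Set.mem_compl_iff, Set.mem_singleton_iff]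
    intro h
    subst h
    exact hvp hz
  · intro a c hc
    have := hc.map (f := (SimpleGraph.Embedding.induce ({v}ᶜ : Set V)).toHom)
      Subtype.val_injective
    exact hT.IsAcyclic _ this

universe u v

private lemma tree_embed (n : ℕ) : ∀ {VT : Type u} [Fintype VT] (T : SimpleGraph VT),
    T.IsTree → Fintype.card VT = n → ∀ {W : Type v} [Fintype W] (H : SimpleGraph W),
    Nonempty W → (∀ w : W, n - 1 ≤ (H.neighborSet w).ncard) →
    ∃ f : VT → W, Function.Injective f ∧ ∀ a b, T.Adj a b → H.Adj (f a) (f b) := by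
  induction n with
  | zero =>
    intro VT _ T hT hcard W _ H _ _
    have : Nonempty VT := hT.isConnected.nonempty
    rw [← Fintype.card_pos_iff] at this
    omega
  | succ n ih =>
    intro VT _ T hT hcard W _ H hW hd
    classical
    by_cases hn : n = 0
    · subst hn
      obtain ⟨w0⟩ := hW
      have hsub : Subsingleton VT := by
        rw [← Fintype.card_le_one_iff_subsingleton]; omega
      refine ⟨fun _ => w0, fun a b _ => Subsingleton.elim a b, fun a b hab => ?_⟩
      exact absurd (Subsingleton.elim a b ▸ hab) (T.irrefl)
    · have h2 : 2 ≤ Fintype.card VT := by omega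
      obtain ⟨vl, ul, hleaf⟩ := exists_leaf hT h2
      have hulvl : ul ≠ vl := by
        have : T.Adj vl ul := by rw [← SimpleGraph.mem_neighborSet, hleaf]; rfl
        exact this.ne'
      have hcard' : Fintype.card ↥({vl}ᶜ : Set VT) = n := by
        rw [Fintype.card_compl_set]
        simp [hcard]
      obtain ⟨g, hginj, ghom⟩ := ih (T.induce ({vl}ᶜ : Set VT)) (tree_minus_leaf hT hleaf)
        hcard' H hW (fun w => le_trans (by omega) (hd w))
      set u' : ↥({vl}ᶜ : Set VT) := ⟨ul, hulvl⟩ with hu'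
      set R : Set W := Set.range g with hR
      have hRcard : R.ncard = n := by
        rw [hR, ← Set.image_univ, Set.ncard_image_of_injective _ hginj, Set.ncard_univ,
          Nat.card_eq_fintype_card, hcard']
      have hNcard : n ≤ (H.neighborSet (g u')).ncard := by
        have := hd (g u')
        omega
      -- find a fresh neighbor of g u'
      have hex : ∃ w1, w1 ∈ H.neighborSet (g u') ∧ w1 ∉ R := by
        by_contra hno
        push_neg at hno
        have hsub : H.neighborSet (g u') ⊆ R \ {g u'} := by
          intro z hz
          exact ⟨hno z hz, fun h => H.irrefl (by rwa [Set.mem_singleton_iff.mp h] at hz)⟩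
        have h1 : (R \ {g u'}).ncard = n - 1 := by
          rw [Set.ncard_diff_singleton_of_mem (show g u' ∈ R from ⟨u', rfl⟩), hRcard]
        have := Set.ncard_le_ncard hsub (Set.toFinite _)
        omega
      obtain ⟨w1, hw1N, hw1R⟩ := hex
      refine ⟨fun x => if hx : x = vl then w1 else g ⟨x, hx⟩, ?_, ?_⟩
      · intro a b hab
        by_cases ha : a = vl <;> by_cases hb : b = vl <;> simp only [ha, hb, dif_pos, dif_neg,
          dite_true, dite_false] at hab
        · rw [ha, hb]
        · exact absurd ⟨⟨b, hb⟩, hab.symm⟩ hw1R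
        · exact absurd ⟨⟨a, ha⟩, hab⟩ hw1R
        · exact Subtype.ext_iff.mp (hginj hab)
      · intro a b hab
        by_cases ha : a = vl
        · subst ha
          have hbu : b = ul := by
            have : b ∈ T.neighborSet a := hab
            rwa [hleaf, Set.mem_singleton_iff] at this
          subst hbu
          simp only [dif_pos rfl, dif_neg hulvl]
          exact hw1N.symm
        · by_cases hb : b = vl
          · subst hb
            have hau : a = ul := by
              have : a ∈ T.neighborSet b := hab.symm
              rwa [hleaf, Set.mem_singleton_iff] at this
            subst hau
            simp only [dif_pos rfl, dif_neg hulvl]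
            exact hw1N
          · simp only [dif_neg ha, dif_neg hb]
            exact ghom ⟨a, ha⟩ ⟨b, hb⟩ hab


private lemma cut_count {W : Type*} [Fintype W] (H : SimpleGraph W) (F : Set (Sym2 W))
    (k : ℕ) (hdeg : ∀ v : W, k ≤ (H.neighborSet v).ncard)
    (X : Set W) (hY : Xᶜ.Nonempty)
    (hcross : ∀ u v : W, H.Adj u v → u ∈ Xᶜ → v ∈ X → s(u, v) ∈ F)
    (hnb : ∀ y ∈ Xᶜ, ∃ x ∈ X, H.Adj y x) : k ≤ F.ncard := by
  classical
  obtain ⟨y0, hy0⟩ := hY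
  have c : ∀ y : W, y ∈ Xᶜ → {x : W // x ∈ X ∧ H.Adj y x} := by
    intro y hy
    have := hnb y hy
    exact ⟨this.choose, this.choose_spec.1, this.choose_spec.2⟩
  set cf : W → W := fun y => if hy : y ∈ Xᶜ then (c y hy).val else y with hcf
  have hcfX : ∀ y ∈ Xᶜ, cf y ∈ X ∧ H.Adj y (cf y) := by
    intro y hy
    simp only [hcf, dif_pos hy]
    exact (c y hy).2
  set E1 : Set (Sym2 W) := (fun y => s(y, cf y)) '' (Xᶜ \ {y0}) with hE1
  set E2 : Set (Sym2 W) := (fun z => s(y0, z)) '' (H.neighborSet y0 ∩ X) with hE2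
  have hE1F : E1 ⊆ F := by
    rintro e ⟨y, ⟨hy, -⟩, rfl⟩
    exact hcross y (cf y) (hcfX y hy).2 hy (hcfX y hy).1
  have hE2F : E2 ⊆ F := by
    rintro e ⟨z, ⟨hzN, hzX⟩, rfl⟩
    exact hcross y0 z hzN hy0 hzX
  have hdisj : Disjoint E1 E2 := by
    rw [Set.disjoint_left]
    rintro e ⟨y, ⟨hy, hyne⟩, rfl⟩ ⟨z, ⟨hzN, hzX⟩, he⟩
    rcases Sym2.eq_iff.mp he with ⟨h1, h2⟩ | ⟨h1, h2⟩
    · exact hyne (by simp [← h1])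
    · exact hy (by rwa [h2] at hzX)
  have hinj1 : Set.InjOn (fun y => s(y, cf y)) (Xᶜ \ {y0}) := by
    rintro y ⟨hy, -⟩ y' ⟨hy', -⟩ he
    rcases Sym2.eq_iff.mp he with ⟨h1, -⟩ | ⟨h1, h2⟩
    · exact h1
    · have := (hcfX y' hy').1
      rw [← h1] at this
      exact absurd this hy
  have hinj2 : Set.InjOn (fun z => s(y0, z)) (H.neighborSet y0 ∩ X) := by
    rintro z ⟨-, hz⟩ z' ⟨-, hz'⟩ he
    rcases Sym2.eq_iff.mp he with ⟨-, h2⟩ | ⟨h1, h2⟩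
    · exact h2
    · rw [← h1] at hz'
      exact absurd hz' hy0
  have hcard1 : E1.ncard = (Xᶜ \ {y0}).ncard := Set.ncard_image_of_injOn hinj1
  have hcard2 : E2.ncard = (H.neighborSet y0 ∩ X).ncard := Set.ncard_image_of_injOn hinj2
  have hsub : H.neighborSet y0 ⊆ (H.neighborSet y0 ∩ X) ∪ (Xᶜ \ {y0}) := by
    intro z hz
    by_cases hzX : z ∈ X
    · exact Or.inl ⟨hz, hzX⟩
    · exact Or.inr ⟨hzX, fun h => H.irrefl (by rwa [Set.mem_singleton_iff.mp h] at hz)⟩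
  have hdegy0 := hdeg y0
  have hNle : (H.neighborSet y0).ncard ≤ (H.neighborSet y0 ∩ X).ncard + (Xᶜ \ {y0}).ncard :=
    le_trans (Set.ncard_le_ncard hsub (Set.toFinite _)) (Set.ncard_union_le _ _)
  have hunion : (E1 ∪ E2).ncard = E1.ncard + E2.ncard :=
    Set.ncard_union_eq hdisj (Set.toFinite _) (Set.toFinite _)
  have hFle : (E1 ∪ E2).ncard ≤ F.ncard :=
    Set.ncard_le_ncard (Set.union_subset hE1F hE2F) (Set.toFinite _)
  omega

private lemma deleteEdges_all_not_connected {W : Type*} (H : SimpleGraph W)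
    (h : Nontrivial W) : ¬ (H.deleteEdges H.edgeSet).Connected := by
  intro hc
  obtain ⟨x, y, hxy⟩ := h
  obtain ⟨p⟩ := hc.preconnected x y
  cases p with
  | nil => exact hxy rfl
  | cons hadj q =>
    rw [deleteEdges_adj, mem_edgeSet] at hadj
    exact hadj.2 hadj.1


end ProofAux


/-- For `k ≥ 2`, every `k`-edge-connected cograph with minimum degree at least
`k + m` contains a copy of any tree of order `m` whose vertex deletion leaves
a `k`-edge-connected graph. -/
theorem stmt17 {VT VG : Type*} [Fintype VT] [Fintype VG]
    (T : SimpleGraph VT) (hT : T.IsTree) (m : ℕ) (hm : Fintype.card VT = m)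
    (k : ℕ) (hk2 : 2 ≤ k) (G : SimpleGraph VG) (hG : IsCograph G)
    (hk : IsKEdgeConnected k G) (hδ : k + m ≤ minDeg G) :
    ∃ f : VT → VG, Function.Injective f ∧
      (∀ a b, T.Adj a b → G.Adj (f a) (f b)) ∧
      IsKEdgeConnected k (G.induce ((Set.range f)ᶜ)) := by
  classical
  -- VG nonempty
  have hVG : Nonempty VG := by
    by_contra h
    rw [not_nonempty_iff] at h
    have : {d | ∃ v : VG, d = (G.neighborSet v).ncard} = ∅ := by
      ext d; simp only [Set.mem_setOf_eq, Set.mem_empty_iff_false, iff_false]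
      rintro ⟨v, -⟩; exact h.false v
    rw [minDeg, this, Nat.sInf_empty] at hδ
    omega
  -- every vertex has degree at least k + m
  have hdeg : ∀ v : VG, k + m ≤ (G.neighborSet v).ncard := fun v =>
    le_trans hδ (Nat.sInf_le ⟨v, rfl⟩)
  -- G is connected
  have hGconn : G.Connected := by
    rcases hk with hle | ⟨hk1, -⟩
    · by_contra hnc
      have h0 : (0 : ℕ) ∈ {n | ∃ F : Set (Sym2 VG), F ⊆ G.edgeSet ∧ F.ncard = n ∧
          ¬ (G.deleteEdges F).Connected} :=
        ⟨∅, Set.empty_subset _, Set.ncard_empty _, by rwa [deleteEdges_empty]⟩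
      have := Nat.sInf_le h0
      rw [eConn] at hle
      omega
    · omega
  have hm1 : 1 ≤ m := by
    have : Nonempty VT := hT.isConnected.nonempty
    rw [← Fintype.card_pos_iff, hm] at this
    omega
  -- order of G
  set n := Fintype.card VG with hn
  have hnbig : k + m + 1 ≤ n := by
    obtain ⟨v⟩ := hVG
    have h1 : G.neighborSet v ⊆ {v}ᶜ := fun z hz => fun h =>
      G.irrefl (by rwa [Set.mem_singleton_iff.mp h] at hz)
    have h2 : ({v}ᶜ : Set VG).ncard = n - 1 := by
      have := Set.ncard_add_ncard_compl ({v} : Set VG)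
      rw [Set.ncard_singleton, Nat.card_eq_fintype_card] at this
      omega
    have := le_trans (hdeg v) (le_trans (Set.ncard_le_ncard h1 (Set.toFinite _)) h2.le)
    omega
  -- complement disconnected
  have hGc : ¬ Gᶜ.Connected := by
    intro h
    exact hG.false (seinsche n G rfl (by omega) hGconn h).some
  obtain ⟨a, b, hab⟩ : ∃ a b : VG, ¬ Gᶜ.Reachable a b := by
    by_contra hall
    push_neg at hall
    exact hGc ((connected_iff _).mpr ⟨fun x y => hall x y, hVG⟩)
  have habne : a ≠ b := fun h => hab (h ▸ Reachable.refl a)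
  -- the ambient set avoiding a and b
  set W0 : Set VG := ({a, b}ᶜ : Set VG) with hW0
  have hW0ne : Nonempty ↥W0 := by
    by_contra h
    rw [not_nonempty_iff] at h
    have hempty : W0 = ∅ := by
      ext z; simp only [Set.mem_empty_iff_false, iff_false]
      intro hz; exact h.false ⟨z, hz⟩
    have h2 : ({a, b} : Set VG).ncard ≤ 2 := by
      apply le_trans (Set.ncard_insert_le _ _)
      rw [Set.ncard_singleton]
    have := Set.ncard_add_ncard_compl ({a, b} : Set VG)
    rw [← hW0, hempty, Set.ncard_empty, Nat.card_eq_fintype_card] at this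
    omega
  have hd0 : ∀ w : ↥W0, m - 1 ≤ ((G.induce W0).neighborSet w).ncard := by
    intro w
    have hsub : G.neighborSet w.val ⊆
        (Subtype.val '' ((G.induce W0).neighborSet w)) ∪ {a, b} := by
      intro z hz
      by_cases hzin : z ∈ W0
      · exact Or.inl ⟨⟨z, hzin⟩, (by exact hz : G.Adj w.val z), rfl⟩
      · right
        rw [hW0, Set.notMem_compl_iff] at hzin
        exact hzin
    have h1 := le_trans (hdeg w.val) (le_trans (Set.ncard_le_ncard hsub (Set.toFinite _))
      (Set.ncard_union_le _ _))
    have h2 : (Subtype.val '' ((G.induce W0).neighborSet w)).ncard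
        = ((G.induce W0).neighborSet w).ncard := Set.ncard_image_of_injective _ Subtype.val_injective
    have h3 : ({a, b} : Set VG).ncard ≤ 2 := by
      apply le_trans (Set.ncard_insert_le _ _)
      rw [Set.ncard_singleton]
    omega
  -- embed the tree avoiding a and b
  obtain ⟨g, hginj, ghom⟩ := tree_embed m T hT hm (G.induce W0) hW0ne hd0
  refine ⟨fun t => (g t).val, Subtype.val_injective.comp hginj, fun x y hxy => ghom x y hxy, ?_⟩
  -- survivors
  set f : VT → VG := fun t => (g t).val with hf
  set S : Set VG := (Set.range f)ᶜ with hS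
  have hfinj : Function.Injective f := fun s t h => hginj (Subtype.ext h)
  have haS : a ∈ S := by
    rintro ⟨t, ht⟩
    exact (g t).2 (by rw [show (g t).val = a from ht]; exact Or.inl rfl)
  have hbS : b ∈ S := by
    rintro ⟨t, ht⟩
    exact (g t).2 (by rw [show (g t).val = b from ht]; exact Or.inr rfl)
  have hrange : (Set.range f).ncard = m := by
    rw [← Set.image_univ, Set.ncard_image_of_injective _ hfinj,
      Set.ncard_univ, Nat.card_eq_fintype_card, hm]
  set HS : SimpleGraph ↥S := G.induce S with hHS
  -- degrees in HS
  have hdS : ∀ x : ↥S, k ≤ (HS.neighborSet x).ncard := by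
    intro x
    have hsub : G.neighborSet x.val ⊆
        (Subtype.val '' (HS.neighborSet x)) ∪ Set.range f := by
      intro z hz
      by_cases hzS : z ∈ S
      · exact Or.inl ⟨⟨z, hzS⟩, (by exact hz : G.Adj x.val z), rfl⟩
      · right
        rw [hS, Set.notMem_compl_iff] at hzS
        exact hzS
    have h1 := le_trans (hdeg x.val) (le_trans (Set.ncard_le_ncard hsub (Set.toFinite _))
      (Set.ncard_union_le _ _))
    have h2 : (Subtype.val '' (HS.neighborSet x)).ncard = (HS.neighborSet x).ncard :=
      Set.ncard_image_of_injective _ Subtype.val_injective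
    omega
  -- the join property on survivors
  have hstar : ∀ x y : ↥S, x ≠ y → ¬ HS.Adj x y → ∃ z : ↥S, HS.Adj z x ∧ HS.Adj z y := by
    intro x y hne hnadj
    have hvne : x.val ≠ y.val := fun h => hne (Subtype.ext h)
    have hnG : ¬ G.Adj x.val y.val := hnadj
    have hcadj : Gᶜ.Adj x.val y.val := ⟨hvne, hnG⟩
    by_cases hax : Gᶜ.Reachable a x.val
    · have hbx : ¬ Gᶜ.Reachable b x.val := fun h => hab (hax.trans h.symm)
      have hby : ¬ Gᶜ.Reachable b y.val := fun h => hbx (h.trans hcadj.reachable.symm)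
      have hbxne : b ≠ x.val := fun h => hbx (h ▸ Reachable.refl b)
      have hbyne : b ≠ y.val := fun h => hby (h ▸ Reachable.refl b)
      have h1 : G.Adj b x.val := by
        by_contra h
        exact hbx (show Gᶜ.Adj b x.val from ⟨hbxne, h⟩).reachable
      have h2 : G.Adj b y.val := by
        by_contra h
        exact hby (show Gᶜ.Adj b y.val from ⟨hbyne, h⟩).reachable
      exact ⟨⟨b, hbS⟩, h1, h2⟩
    · have hay : ¬ Gᶜ.Reachable a y.val := fun h => hax (h.trans hcadj.reachable.symm)
      have haxne : a ≠ x.val := fun h => hax (h ▸ Reachable.refl a)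
      have hayne : a ≠ y.val := fun h => hay (h ▸ Reachable.refl a)
      have h1 : G.Adj a x.val := by
        by_contra h
        exact hax (show Gᶜ.Adj a x.val from ⟨haxne, h⟩).reachable
      have h2 : G.Adj a y.val := by
        by_contra h
        exact hay (show Gᶜ.Adj a y.val from ⟨hayne, h⟩).reachable
      exact ⟨⟨a, haS⟩, h1, h2⟩
  -- conclude edge connectivity
  left
  have hSnontriv : Nontrivial ↥S :=
    ⟨⟨a, haS⟩, ⟨b, hbS⟩, fun h => habne (congrArg Subtype.val h)⟩
  apply le_csInf
  · exact ⟨HS.edgeSet.ncard, HS.edgeSet, subset_rfl, rfl,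
      deleteEdges_all_not_connected HS hSnontriv⟩
  · rintro q ⟨F, hFsub, rfl, hFdisc⟩
    -- the cut structure
    have hSne : Nonempty ↥S := ⟨⟨a, haS⟩⟩
    have hpre : ¬ (HS.deleteEdges F).Preconnected := by
      intro hp
      exact hFdisc ((connected_iff _).mpr ⟨hp, hSne⟩)
    rw [SimpleGraph.Preconnected] at hpre
    push_neg at hpre
    obtain ⟨x0, y0, hxy0⟩ := hpre
    set X : Set ↥S := {z | (HS.deleteEdges F).Reachable x0 z} with hX
    have hy0 : y0 ∈ Xᶜ := hxy0
    have hcrossX : ∀ u v : ↥S, HS.Adj u v → u ∈ Xᶜ → v ∈ X → s(u, v) ∈ F := by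
      intro u v hadj hu hv
      by_contra hF
      exact hu (hv.trans (SimpleGraph.Adj.reachable (by
        rw [deleteEdges_adj]
        exact ⟨hadj.symm, fun h => hF (by rwa [Sym2.eq_swap] at h)⟩)))
    -- dichotomy
    by_cases hY0 : ∃ y ∈ Xᶜ, ∀ z, HS.Adj y z → z ∈ Xᶜ
    · -- X side has all-internal vertices impossible; use swapped sides
      obtain ⟨yy, hyy, hyyint⟩ := hY0
      have hX0 : ∀ x ∈ X, ∃ z ∈ Xᶜ, HS.Adj x z := by
        intro x hx
        by_contra hno
        push_neg at hno
        -- x is internal on the X side: contradiction with hstar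
        have hxint : ∀ z, HS.Adj x z → z ∈ X := by
          intro z hz
          by_contra hzX
          exact (hno z hzX) hz
        have hxyne : x ≠ yy := fun h => (h ▸ hyy : x ∈ Xᶜ) hx
        have hnadj : ¬ HS.Adj x yy := fun h => hyy (hxint yy h)
        obtain ⟨z, hz1, hz2⟩ := hstar x yy hxyne hnadj
        exact (hyyint z hz2.symm) (hxint z hz1.symm)
      refine cut_count HS F k hdS Xᶜ ?_ ?_ ?_
      · rw [compl_compl]
        exact ⟨x0, Reachable.refl x0⟩
      · intro u v hadj hu hv
        rw [compl_compl] at hu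
        rw [Sym2.eq_swap]
        exact hcrossX v u hadj.symm hv hu
      · intro y hy
        rw [compl_compl] at hy
        obtain ⟨z, hz1, hz2⟩ := hX0 y hy
        exact ⟨z, hz1, hz2⟩
    · push_neg at hY0
      refine cut_count HS F k hdS X ⟨y0, hy0⟩ hcrossX ?_
      intro y hy
      obtain ⟨z, hz1, hz2⟩ := hY0 y hy
      exact ⟨z, Set.notMem_compl_iff.mp hz2, hz1⟩
end
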